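/- Removal of an isolated component: let A = diag(A₁, A₂) be block diagonal with conformably stacked X = [X₁; X₂], and let f_k denote the sum-readout GIN on k nodes: f_k(B, Y) = 𝟙_kᵀ(B + (1+ε)I_k)·Y·Θ. If D + N + Nε ≠ 0 for the full graph (D = Σ_{ij}A_{ij}, N total nodes), then there exists p ∈ ℝ^{1×F} such that f_N(A, X + 𝟙_N·p) = f_{N₁}(A₁, X₁), i.e., the prompted full graph has the same representation as the graph with component 2 removed. -/

import Mathlib

open Matrix BigOperators

/-- One-layer linear GIN with sum readout: 𝟙ᵀ (A + (1+ε) I) X Θ as a row vector. -/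
noncomputable def gin {n : Type*} [Fintype n] [DecidableEq n] {F Fp : ℕ}
    (ε : ℝ) (Θ : Matrix (Fin F) (Fin Fp) ℝ)
    (A : Matrix n n ℝ) (X : Matrix n (Fin F) ℝ) : Fin Fp → ℝ :=
  fun j => ∑ i, ((A + (1 + ε) • (1 : Matrix n n ℝ)) * X * Θ) i j

/-- 𝟙·p : the matrix each of whose rows is the row vector p. -/
def prompt (n : Type*) {F : ℕ} (p : Fin F → ℝ) : Matrix n (Fin F) ℝ :=
  Matrix.of fun _ j => p j

/-!
The readout is linear in the features, and a constant prompt `𝟙 p` contributes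
`(∑ᵢⱼ Aᵢⱼ + N (1 + ε)) • p Θ`. On a block-diagonal graph the readout is the sum of the readouts
of the two components, so when that weight is nonzero a prompt can be scaled to cancel exactly
the contribution of the second component.
-/

lemma prompt_eq_vecMulVec (n : Type*) {F : ℕ} (p : Fin F → ℝ) : prompt n p = vecMulVec 1 p := by
  ext i j
  simp [prompt, vecMulVec_apply]

section
variable {n : Type*} [Fintype n] [DecidableEq n] {F Fp : ℕ} (ε : ℝ) (Θ : Matrix (Fin F) (Fin Fp) ℝ)

lemma gin_eq_vecMul (A : Matrix n n ℝ) (X : Matrix n (Fin F) ℝ) :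
    gin ε Θ A X = (1 ᵥ* ((A + (1 + ε) • (1 : Matrix n n ℝ)) * X)) ᵥ* Θ := by
  ext j
  rw [vecMul_vecMul]
  simp [gin, vecMul, dotProduct]

lemma gin_add (A : Matrix n n ℝ) (X Y : Matrix n (Fin F) ℝ) :
    gin ε Θ A (X + Y) = gin ε Θ A X + gin ε Θ A Y := by
  simp only [gin_eq_vecMul, Matrix.mul_add, vecMul_add, add_vecMul]

lemma sum_add_smul_one (A : Matrix n n ℝ) (c : ℝ) :
    ∑ i, ∑ k, (A + c • 1) i k = ∑ i, ∑ k, A i k + Fintype.card n * c := by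
  simp [Finset.sum_add_distrib, one_apply]

lemma gin_prompt (A : Matrix n n ℝ) (p : Fin F → ℝ) :
    gin ε Θ A (prompt n p) = (∑ i, ∑ k, A i k + Fintype.card n * (1 + ε)) • (p ᵥ* Θ) := by
  rw [gin_eq_vecMul, prompt_eq_vecMulVec, mul_vecMulVec, vecMul_vecMulVec, smul_vecMul]
  congr 1
  rw [← sum_add_smul_one]
  simp [dotProduct, mulVec]

lemma exists_prompt_gin_add_eq_sub {A : Matrix n n ℝ}
    (hA : ∑ i, ∑ k, A i k + Fintype.card n * (1 + ε) ≠ 0) (X : Matrix n (Fin F) ℝ)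
    (v : Fin F → ℝ) : ∃ p, gin ε Θ A (X + prompt n p) = gin ε Θ A X - v ᵥ* Θ := by
  refine ⟨-(∑ i, ∑ k, A i k + Fintype.card n * (1 + ε))⁻¹ • v, ?_⟩
  rw [gin_add, gin_prompt, smul_vecMul, smul_smul, mul_neg, mul_inv_cancel₀ hA, neg_smul,
    one_smul, sub_eq_add_neg]

lemma gin_fromBlocks_fromRows {m₁ m₂ : Type*} [Fintype m₁] [DecidableEq m₁] [Fintype m₂]
    [DecidableEq m₂] (A₁ : Matrix m₁ m₁ ℝ) (A₂ : Matrix m₂ m₂ ℝ) (X₁ : Matrix m₁ (Fin F) ℝ)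
    (X₂ : Matrix m₂ (Fin F) ℝ) :
    gin ε Θ (fromBlocks A₁ 0 0 A₂) (fromRows X₁ X₂) = gin ε Θ A₁ X₁ + gin ε Θ A₂ X₂ := by
  have hdiag : fromBlocks A₁ 0 0 A₂ + (1 + ε) • (1 : Matrix (m₁ ⊕ m₂) (m₁ ⊕ m₂) ℝ)
      = fromBlocks (A₁ + (1 + ε) • 1) 0 0 (A₂ + (1 + ε) • 1) := by
    rw [← fromBlocks_one, fromBlocks_smul, fromBlocks_add]
    simp
  simp only [gin_eq_vecMul, hdiag, fromBlocks_mul_fromRows, Matrix.zero_mul, add_zero, zero_add,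
    vecMul_fromRows, Pi.one_comp, add_vecMul]

end

theorem stmt19 (N₁ N₂ F Fp : ℕ)
    (A₁ : Matrix (Fin N₁) (Fin N₁) ℝ) (A₂ : Matrix (Fin N₂) (Fin N₂) ℝ)
    (X₁ : Matrix (Fin N₁) (Fin F) ℝ) (X₂ : Matrix (Fin N₂) (Fin F) ℝ)
    (ε : ℝ) (Θ : Matrix (Fin F) (Fin Fp) ℝ)
    (A : Matrix (Fin N₁ ⊕ Fin N₂) (Fin N₁ ⊕ Fin N₂) ℝ)
    (hA : A = Matrix.fromBlocks A₁ 0 0 A₂)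
    (X : Matrix (Fin N₁ ⊕ Fin N₂) (Fin F) ℝ)
    (hX : X = Matrix.of (Sum.elim X₁ X₂))
    (hD : (∑ i, ∑ j, A i j) + (N₁ + N₂) + (N₁ + N₂) * ε ≠ 0) :
    ∃ p : Fin F → ℝ,
      gin ε Θ A (X + prompt (Fin N₁ ⊕ Fin N₂) p) = gin ε Θ A₁ X₁ := by
  have hc : ∑ i, ∑ k, A i k + Fintype.card (Fin N₁ ⊕ Fin N₂) * (1 + ε) ≠ 0 := by
    convert hD using 1
    simp only [Fintype.card_sum, Fintype.card_fin, Nat.cast_add]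
    ring
  obtain ⟨p, hp⟩ := exists_prompt_gin_add_eq_sub ε Θ hc X
    (1 ᵥ* ((A₂ + (1 + ε) • (1 : Matrix (Fin N₂) (Fin N₂) ℝ)) * X₂))
  refine ⟨p, ?_⟩
  rw [hp, hA, hX, ← fromRows, gin_fromBlocks_fromRows, gin_eq_vecMul ε Θ A₂, add_sub_cancel_right]
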